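/- Let 0 < p ≤ q < ∞, let u be a weight on ℝ₊, let w be a weight on ℝ²₊, and let C > 0. Then ‖f‖_{Λ^q(ℝ²,u)} ≤ C ‖f‖_{Λ₂^p(w)} for all measurable f : ℝ² → ℝ if and only if (∫_0^{|D|} u(θ) dθ)^{1/q} ≤ C (∫_D w(s,t) ds dt)^{1/p} for every decreasing set D ⊂ ℝ²₊. In particular, the best constant in the embedding Λ₂^p(w) ⊂ Λ^q(ℝ²,u) is sup_D (∫_0^{|D|} u)^{1/q} / (∫_D w)^{1/p} over decreasing sets D. -/

import Mathlib

open MeasureTheory ENNReal Set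

noncomputable section

/-- Decreasing rearrangement of an `ℝ≥0∞`-valued function on `ℝ` (w.r.t. Lebesgue measure):
`h*(t) = inf {σ : |{x : σ < h x}| ≤ t}`. -/
def rearrE (h : ℝ → ℝ≥0∞) (t : ℝ) : ℝ≥0∞ :=
  sInf {σ : ℝ≥0∞ | volume {x : ℝ | σ < h x} ≤ ENNReal.ofReal t}

/-- Decreasing rearrangement of a real-valued function on `ℝ`. -/
def rearr (h : ℝ → ℝ) (t : ℝ) : ℝ≥0∞ :=
  rearrE (fun x => ENNReal.ofReal |h x|) t

/-- `f*_y(x,t)`: rearrangement in the second variable. -/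
def rearrY (f : ℝ × ℝ → ℝ) (x t : ℝ) : ℝ≥0∞ := rearr (fun y => f (x, y)) t

/-- `f*_x(s,y)`: rearrangement in the first variable. -/
def rearrX (f : ℝ × ℝ → ℝ) (s y : ℝ) : ℝ≥0∞ := rearr (fun x => f (x, y)) s

/-- The multivariate rearrangement `f*_{yx}(s,t) = (x ↦ f*_y(x,t))*(s)`. -/
def rearrYX (f : ℝ × ℝ → ℝ) (s t : ℝ) : ℝ≥0∞ := rearrE (fun x => rearrY f x t) s

/-- `f**_{yx}(s,t) = (1/s)∫_0^s (x ↦ (1/t)∫_0^t f*_y(x,τ) dτ)*(σ) dσ`. -/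
def starstarYX (f : ℝ × ℝ → ℝ) (s t : ℝ) : ℝ≥0∞ :=
  (ENNReal.ofReal s)⁻¹ *
    ∫⁻ σ in Ioo (0:ℝ) s,
      rearrE (fun x => (ENNReal.ofReal t)⁻¹ * ∫⁻ τ in Ioo (0:ℝ) t, rearrY f x τ) σ

/-- `f**(s,t) = (1/(st))∫_0^s∫_0^t f*_{yx}(σ,τ) dσ dτ`. -/
def starstar (f : ℝ × ℝ → ℝ) (s t : ℝ) : ℝ≥0∞ :=
  (ENNReal.ofReal (s * t))⁻¹ * ∫⁻ σ in Ioo (0:ℝ) s, ∫⁻ τ in Ioo (0:ℝ) t, rearrYX f σ τ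

/-- Decreasing rearrangement of `f : ℝ² → ℝ` w.r.t. two-dimensional Lebesgue measure. -/
def rearr2 (f : ℝ × ℝ → ℝ) (θ : ℝ) : ℝ≥0∞ :=
  sInf {σ : ℝ≥0∞ | volume {z : ℝ × ℝ | σ < ENNReal.ofReal |f z|} ≤ ENNReal.ofReal θ}

/-- A weight on `ℝ₊`: nonnegative and locally integrable. -/
def IsWeight (u : ℝ → ℝ) : Prop :=
  (∀ x, 0 ≤ u x) ∧ LocallyIntegrableOn u (Ioi 0)

/-- A weight on `ℝ²₊`: nonnegative and locally integrable. -/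
def IsWeight2 (w : ℝ × ℝ → ℝ) : Prop :=
  (∀ z, 0 ≤ w z) ∧ LocallyIntegrableOn w (Ioi 0 ×ˢ Ioi 0)

/-- `‖g‖_{Λ^p(u)}` for `g : ℝ → ℝ`. -/
def lamNorm (p : ℝ) (u : ℝ → ℝ) (g : ℝ → ℝ) : ℝ≥0∞ :=
  (∫⁻ t in Ioi (0:ℝ), (rearr g t) ^ p * ENNReal.ofReal (u t)) ^ (1 / p)

/-- `‖f‖_{Λ₂^p(w)}` for `f : ℝ² → ℝ` and a weight `w` on `ℝ²₊`. -/
def lam2Norm (p : ℝ) (w : ℝ × ℝ → ℝ) (f : ℝ × ℝ → ℝ) : ℝ≥0∞ :=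
  (∫⁻ s in Ioi (0:ℝ), ∫⁻ t in Ioi (0:ℝ),
      (rearrYX f s t) ^ p * ENNReal.ofReal (w (s, t))) ^ (1 / p)

/-- `‖f‖_{Λ^p(ℝ²,u)}`, by means of the 2D rearrangement. -/
def lamR2Norm (p : ℝ) (u : ℝ → ℝ) (f : ℝ × ℝ → ℝ) : ℝ≥0∞ :=
  (∫⁻ θ in Ioi (0:ℝ), (rearr2 f θ) ^ p * ENNReal.ofReal (u θ)) ^ (1 / p)

/-- The mixed Lorentz quasinorm `‖f‖_{Λ^p(u)[Λ^p(v)]}`. -/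
def mixedNorm (p : ℝ) (u v : ℝ → ℝ) (f : ℝ × ℝ → ℝ) : ℝ≥0∞ :=
  (∫⁻ s in Ioi (0:ℝ),
      rearrE (fun x => ∫⁻ t in Ioi (0:ℝ), (rearrY f x t) ^ p * ENNReal.ofReal (v t)) s *
        ENNReal.ofReal (u s)) ^ (1 / p)

/-- The mixed Lorentz quasinorm with the order of the variables reversed,
`‖f‖_{Λ^p(v)[Λ^p(u)]}`. -/
def mixedNormRev (p : ℝ) (v u : ℝ → ℝ) (f : ℝ × ℝ → ℝ) : ℝ≥0∞ :=
  (∫⁻ t in Ioi (0:ℝ),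
      rearrE (fun y => ∫⁻ s in Ioi (0:ℝ), (rearrX f s y) ^ p * ENNReal.ofReal (u s)) t *
        ENNReal.ofReal (v t)) ^ (1 / p)

/-- The `B_p` condition for a weight on `ℝ₊`. -/
def Bp (p : ℝ) (v : ℝ → ℝ) : Prop :=
  ∃ C : ℝ, 0 < C ∧ ∀ r : ℝ, 0 < r →
    ENNReal.ofReal (r ^ p) * ∫⁻ x in Ioi r, ENNReal.ofReal (v x / x ^ p) ≤
      ENNReal.ofReal C * ∫⁻ x in Ioo (0:ℝ) r, ENNReal.ofReal (v x)

/-- Two-dimensional Hardy operator acting on `ℝ≥0∞`-valued functions. -/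
def S2E (g : ℝ × ℝ → ℝ≥0∞) (s t : ℝ) : ℝ≥0∞ :=
  (ENNReal.ofReal (s * t))⁻¹ * ∫⁻ σ in Ioo (0:ℝ) s, ∫⁻ τ in Ioo (0:ℝ) t, g (σ, τ)

/-- Nonincreasing in each variable on `ℝ²₊`. -/
def BiAntitone (g : ℝ × ℝ → ℝ≥0∞) : Prop :=
  ∀ s s' t t' : ℝ, 0 < s' → s' ≤ s → 0 < t' → t' ≤ t → g (s, t) ≤ g (s', t')

/-- The class `B_p^{(2)}`: the two-dimensional Hardy operator is bounded on the cone of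
nonnegative functions nonincreasing in each variable in `L^p(ℝ²₊, w)`. -/
def Bp2 (p : ℝ) (w : ℝ × ℝ → ℝ) : Prop :=
  ∃ C : ℝ, 0 < C ∧ ∀ g : ℝ × ℝ → ℝ≥0∞, Measurable g → BiAntitone g →
    (∫⁻ s in Ioi (0:ℝ), ∫⁻ t in Ioi (0:ℝ), (S2E g s t) ^ p * ENNReal.ofReal (w (s, t))) ≤
      ENNReal.ofReal C *
        ∫⁻ s in Ioi (0:ℝ), ∫⁻ t in Ioi (0:ℝ), (g (s, t)) ^ p * ENNReal.ofReal (w (s, t))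

/-- A decreasing subset of `ℝ²₊`. -/
def DecreasingSet (D : Set (ℝ × ℝ)) : Prop :=
  MeasurableSet D ∧ D ⊆ Ioi 0 ×ˢ Ioi 0 ∧
    ∀ s t s' t' : ℝ, (s, t) ∈ D → 0 < s' → s' ≤ s → 0 < t' → t' ≤ t → (s', t') ∈ D

/-- `w(E) = ∫_E w`. -/
def wMeas (w : ℝ × ℝ → ℝ) (E : Set (ℝ × ℝ)) : ℝ≥0∞ := ∫⁻ z in E, ENNReal.ofReal (w z)

/-- `U(m) = ∫_0^m u(θ) dθ`, for `m ∈ [0,∞]`. -/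
def Uof (u : ℝ → ℝ) (m : ℝ≥0∞) : ℝ≥0∞ :=
  ∫⁻ θ in {θ : ℝ | 0 < θ ∧ ENNReal.ofReal θ < m}, ENNReal.ofReal (u θ)

/-- A covering family of `ℝ²₊`: an increasing sequence of decreasing sets covering `ℝ²₊`. -/
def CoveringFamily (D : ℕ → Set (ℝ × ℝ)) : Prop :=
  (∀ k, DecreasingSet (D k)) ∧ Monotone D ∧ (⋃ k, D k) = Ioi 0 ×ˢ Ioi 0

end

/-!
Necessity: test the embedding on `f = 1_D`. For a decreasing set `D`, both rearrangement steps
only replace each section of `D` by an initial interval of the same length, which changes the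
section by at most one point; hence `f*_{yx} = 1_D` a.e. on `ℝ²₊`, and the two norms of `1_D`
are `U(|D|)^{1/q}` and `w(D)^{1/p}`.

Sufficiency: `f*_{yx}` is equimeasurable with `f`, so by the layer-cake formula
`‖f‖_{Λ^q(u)}^q = ∫ q l^{q-1} U(|E_l|) dl` and `‖f‖_{Λ₂^p(w)}^p = ∫ p l^{p-1} w(E_l) dl`, where
`E_l = {f*_{yx} > l}` is a decreasing set. The hypothesis bounds `U(|E_l|)` by
`C^q w(E_l)^{q/p}`, and since `l ↦ w(E_l)` is nonincreasing, the Hardy-type inequality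
`∫ q l^{q-1} W^{q/p} ≤ (∫ p l^{p-1} W)^{q/p}` concludes. That inequality follows from
`l^p W(l) ≤ ∫_0^l p s^{p-1} W(s) ds` and `r ∫ ρ(-∞, l)^{r-1} dρ(l) ≤ ρ(ℝ)^r` for finite `ρ`.
-/

noncomputable section

def Ioo0 (m : ℝ≥0∞) : Set ℝ := {t : ℝ | 0 < t ∧ ENNReal.ofReal t < m}

/-- The density of `d(l ^ e)` on `(0, ∞)`. -/
def rpowDensity (e l : ℝ) : ℝ≥0∞ := ENNReal.ofReal (e * l ^ (e - 1))

def decRearr {α : Type*} [MeasurableSpace α] (μ : Measure α) (h : α → ℝ≥0∞) (t : ℝ) :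
    ℝ≥0∞ :=
  sInf {σ : ℝ≥0∞ | μ {x | σ < h x} ≤ ENNReal.ofReal t}

end

lemma rearrE_eq_decRearr (h : ℝ → ℝ≥0∞) : rearrE h = decRearr volume h := rfl

lemma rearr2_eq_decRearr (f : ℝ × ℝ → ℝ) :
    rearr2 f = decRearr volume (fun z => ENNReal.ofReal |f z|) := rfl

lemma measurableSet_Ioo0 (m : ℝ≥0∞) : MeasurableSet (Ioo0 m) :=
  measurableSet_Ioi.inter (measurableSet_lt ENNReal.measurable_ofReal measurable_const)

lemma Ioo0_subset_Ioi (m : ℝ≥0∞) : Ioo0 m ⊆ Ioi 0 := fun _ ht => ht.1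

lemma Ioo0_of_ne_top {m : ℝ≥0∞} (hm : m ≠ ∞) : Ioo0 m = Ioo 0 m.toReal := by
  ext t
  exact and_congr_right fun ht => ENNReal.ofReal_lt_iff_lt_toReal ht.le hm

lemma Ioo0_top : Ioo0 ∞ = Ioi 0 := by
  ext t
  simp [Ioo0]

@[simp]
lemma volume_Ioo0 (m : ℝ≥0∞) : volume (Ioo0 m) = m := by
  rcases eq_or_ne m ∞ with rfl | hm
  · rw [Ioo0_top, Real.volume_Ioi]
  · rw [Ioo0_of_ne_top hm, Real.volume_Ioo, sub_zero, ENNReal.ofReal_toReal hm]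

section DecRearr

variable {α : Type*} [MeasurableSpace α] (μ : Measure α)

lemma lt_decRearr_iff (h : α → ℝ≥0∞) (t : ℝ) (l : ℝ≥0∞) :
    l < decRearr μ h t ↔ ENNReal.ofReal t < μ {x | l < h x} := by
  refine ⟨fun H => not_le.1 fun hle => (show decRearr μ h t ≤ l from sInf_le hle).not_gt H,
    fun H => ?_⟩
  have hl : l ≠ ∞ := by rintro rfl; simp at H
  -- the level sets `{l + 1/(n+1) < h}` increase to `{l < h}`, so one of them is already too big
  set s : ℕ → Set α := fun n => {x | l + ((n + 1 : ℕ) : ℝ≥0∞)⁻¹ < h x}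
  have hmono : Monotone s := by
    intro a b hab x hx
    have hinv : ((b + 1 : ℕ) : ℝ≥0∞)⁻¹ ≤ ((a + 1 : ℕ) : ℝ≥0∞)⁻¹ :=
      ENNReal.inv_le_inv.2 (by exact_mod_cast Nat.succ_le_succ hab)
    exact lt_of_le_of_lt (add_le_add_right hinv l) hx
  have hUnion : (⋃ n, s n) = {x | l < h x} := by
    ext x
    simp only [s, mem_iUnion]
    refine ⟨fun ⟨n, hn⟩ => show l < h x from lt_of_le_of_lt le_self_add hn,
      fun (hx : l < h x) => ?_⟩
    obtain ⟨n, hn⟩ := ENNReal.exists_inv_nat_lt (tsub_pos_of_lt hx).ne'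
    refine ⟨n, ?_⟩
    have hn' : ((n + 1 : ℕ) : ℝ≥0∞)⁻¹ < h x - l :=
      lt_of_le_of_lt (ENNReal.inv_le_inv.2 (by exact_mod_cast Nat.le_succ n)) hn
    simpa [add_tsub_cancel_of_le hx.le] using ENNReal.add_lt_add_left hl hn'
  rw [← hUnion, hmono.measure_iUnion, lt_iSup_iff] at H
  obtain ⟨n, hn⟩ := H
  have hpos : ((n + 1 : ℕ) : ℝ≥0∞)⁻¹ ≠ 0 := by simp
  refine lt_of_lt_of_le (ENNReal.lt_add_right hl hpos) (le_sInf fun σ hσ => ?_)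
  by_contra! hσl
  exact (le_trans (measure_mono fun x hx => lt_trans hσl hx) hσ).not_gt hn

lemma decRearr_antitone (h : α → ℝ≥0∞) : Antitone (decRearr μ h) :=
  fun _ _ htt' => sInf_le_sInf fun _ hσ => le_trans hσ (ENNReal.ofReal_le_ofReal htt')

lemma decRearr_mono {h h' : α → ℝ≥0∞} (hh : h ≤ h') (t : ℝ) :
    decRearr μ h t ≤ decRearr μ h' t :=
  sInf_le_sInf fun _ hσ => le_trans (measure_mono fun x hx => lt_of_lt_of_le hx (hh x)) hσ

lemma setOf_pos_lt_decRearr (h : α → ℝ≥0∞) (l : ℝ≥0∞) :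
    {t | 0 < t ∧ l < decRearr μ h t} = Ioo0 (μ {x | l < h x}) := by
  ext t
  exact and_congr_right fun _ => lt_decRearr_iff μ h t l

lemma decRearr_indicator_one (S : Set α) {t : ℝ} (ht : 0 < t) :
    decRearr μ (S.indicator 1) t = (Ioo0 (μ S)).indicator 1 t := by
  have hlevel : ∀ l : ℝ≥0∞, {x | l < S.indicator 1 x} = if l < 1 then S else ∅ := by
    intro l
    ext x
    by_cases hx : x ∈ S <;> split_ifs <;> simp_all
  refine le_antisymm ?_ ?_
  · by_cases htS : t ∈ Ioo0 (μ S)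
    · rw [indicator_of_mem htS]
      exact sInf_le (by simp [hlevel])
    · rw [indicator_of_notMem htS]
      exact sInf_le (by simpa [hlevel, Ioo0, ht] using htS)
  · refine (indicator_le fun t htS => ?_) t
    refine le_of_forall_lt fun l hl => (lt_decRearr_iff μ _ t l).2 ?_
    rw [Pi.one_apply] at hl
    simpa [hlevel, hl] using htS.2

end DecRearr

section LayerCake

variable {e : ℝ}

lemma measurable_rpowDensity (e : ℝ) : Measurable (rpowDensity e) :=
  (measurable_const.mul (measurable_id.pow_const _)).ennreal_ofReal

lemma setLIntegral_rpowDensity_Ioo (he : 0 < e) {b : ℝ} (hb : 0 ≤ b) :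
    ∫⁻ l in Ioo 0 b, rpowDensity e l = ENNReal.ofReal (b ^ e) := by
  have hint : IntervalIntegrable (fun l : ℝ => e * l ^ (e - 1)) volume 0 b :=
    (intervalIntegral.intervalIntegrable_rpow' (by linarith)).const_mul e
  have hnn : 0 ≤ᵐ[volume.restrict (Ioo 0 b)] fun l : ℝ => e * l ^ (e - 1) :=
    (ae_restrict_iff' measurableSet_Ioo).2 (.of_forall fun l hl =>
      mul_nonneg he.le (Real.rpow_nonneg hl.1.le _))
  unfold rpowDensity
  rw [← ofReal_integral_eq_lintegral_ofReal
    ((intervalIntegrable_iff_integrableOn_Ioo_of_le hb).1 hint) hnn,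
    ← integral_Ioc_eq_integral_Ioo, ← intervalIntegral.integral_of_le hb,
    intervalIntegral.integral_const_mul, integral_rpow (Or.inl (by linarith)),
    sub_add_cancel, Real.zero_rpow he.ne', sub_zero, mul_div_cancel₀ _ he.ne']

lemma setLIntegral_rpowDensity_Ioo0 (he : 0 < e) (m : ℝ≥0∞) :
    ∫⁻ l in Ioo0 m, rpowDensity e l = m ^ e := by
  rcases eq_or_ne m ∞ with rfl | hm
  · rw [ENNReal.top_rpow_of_pos he]
    refine ENNReal.eq_top_of_forall_nnreal_le fun r => ?_
    have hb : (0 : ℝ) ≤ (r : ℝ) ^ (1 / e) := by positivity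
    calc (r : ℝ≥0∞) = ENNReal.ofReal (((r : ℝ) ^ (1 / e)) ^ e) := by
          rw [← Real.rpow_mul r.coe_nonneg, one_div_mul_cancel he.ne', Real.rpow_one,
            ofReal_coe_nnreal]
      _ = ∫⁻ l in Ioo 0 ((r : ℝ) ^ (1 / e)), rpowDensity e l :=
          (setLIntegral_rpowDensity_Ioo he hb).symm
      _ ≤ ∫⁻ l in Ioo0 ∞, rpowDensity e l :=
          lintegral_mono_set (Ioo0_top ▸ Ioo_subset_Ioi_self)
  · rw [Ioo0_of_ne_top hm, setLIntegral_rpowDensity_Ioo he ENNReal.toReal_nonneg,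
      ← ENNReal.ofReal_rpow_of_nonneg ENNReal.toReal_nonneg he.le, ENNReal.ofReal_toReal hm]

/-- Unlike Mathlib's layer-cake formulas, `F` may take the value `∞` here. -/
lemma lintegral_rpow_eq_lintegral_rpowDensity_mul {α : Type*} [MeasurableSpace α]
    {ν : Measure α} [SFinite ν] (he : 0 < e) {F : α → ℝ≥0∞} (hF : Measurable F) :
    ∫⁻ a, F a ^ e ∂ν = ∫⁻ l in Ioi 0, rpowDensity e l * ν {a | ENNReal.ofReal l < F a} := by
  set L : Set (α × ℝ) := {p | ENNReal.ofReal p.2 < F p.1}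
  have hL : MeasurableSet L :=
    measurableSet_lt (ENNReal.measurable_ofReal.comp measurable_snd) (hF.comp measurable_fst)
  have hpow : ∀ a, F a ^ e = ∫⁻ l in Ioi 0, L.indicator (fun p => rpowDensity e p.2) (a, l) := by
    intro a
    have hsec : Ioo0 (F a) = {l | ENNReal.ofReal l < F a} ∩ Ioi 0 := by
      ext l; exact and_comm
    rw [← setLIntegral_rpowDensity_Ioo0 he, hsec, ← Measure.restrict_restrict
      (measurableSet_lt ENNReal.measurable_ofReal measurable_const), ← lintegral_indicator
      (measurableSet_lt ENNReal.measurable_ofReal measurable_const)]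
    rfl
  have hswap : AEMeasurable (Function.uncurry fun a l => L.indicator
      (fun p => rpowDensity e p.2) (a, l)) (ν.prod (volume.restrict (Ioi 0))) :=
    (((measurable_rpowDensity e).comp measurable_snd).indicator hL).aemeasurable
  simp_rw [hpow]
  rw [lintegral_lintegral_swap hswap]
  refine lintegral_congr fun l => ?_
  have hslice : (fun a => L.indicator (fun p => rpowDensity e p.2) (a, l)) =
      {a | ENNReal.ofReal l < F a}.indicator fun _ => rpowDensity e l := by
    ext a
    simp only [L, indicator_apply, mem_ofPred_eq]
  rw [hslice, lintegral_indicator_const (measurableSet_lt measurable_const hF)]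

lemma setLIntegral_rpow_mul_eq {α : Type*} [MeasurableSpace α] {μ : Measure α} [SFinite μ]
    {s : Set α} {e : ℝ} (he : 0 < e) {F y : α → ℝ≥0∞} (hF : Measurable F)
    (hy : AEMeasurable y (μ.restrict s)) :
    ∫⁻ a in s, F a ^ e * y a ∂μ =
      ∫⁻ l in Ioi 0, rpowDensity e l * ∫⁻ a in {a | ENNReal.ofReal l < F a} ∩ s, y a ∂μ := by
  have hwd : ∫⁻ a in s, F a ^ e * y a ∂μ = ∫⁻ a, F a ^ e ∂(μ.restrict s).withDensity y := by
    rw [lintegral_withDensity_eq_lintegral_mul₀ hy (hF.pow_const e).aemeasurable]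
    simp only [Pi.mul_apply, mul_comm]
  rw [hwd, lintegral_rpow_eq_lintegral_rpowDensity_mul he hF]
  refine lintegral_congr fun l => ?_
  rw [withDensity_apply' y, Measure.restrict_restrict (measurableSet_lt measurable_const hF)]

end LayerCake

section Hardy

lemma monotone_measure_Iio (ρ : Measure ℝ) : Monotone fun l => ρ (Iio l) :=
  fun _ _ hab => measure_mono (Iio_subset_Iio hab)

lemma measure_setOf_lt_measure_Iio_le (ρ : Measure ℝ) [IsFiniteMeasure ρ] (c : ℝ≥0∞) :
    ρ {l | c < ρ (Iio l)} ≤ ρ univ - c := by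
  have hU : MeasurableSet {l | c < ρ (Iio l)} :=
    (monotone_measure_Iio ρ).measurable measurableSet_Ioi
  -- a compact subset of the upper set `{l | c < ρ (Iio l)}` lies above its minimum
  rw [hU.measure_eq_iSup_isCompact ρ]
  refine iSup₂_le fun K hKU => iSup_le fun hK => ?_
  rcases K.eq_empty_or_nonempty with rfl | hKne
  · simp
  have hm : c < ρ (Iio (sInf K)) := hKU (hK.sInf_mem hKne)
  calc ρ K ≤ ρ (Iio (sInf K))ᶜ :=
        measure_mono fun x hx => not_lt.2 (csInf_le hK.bddBelow hx)
    _ = ρ univ - ρ (Iio (sInf K)) := measure_compl measurableSet_Iio (measure_ne_top ρ _)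
    _ ≤ ρ univ - c := tsub_le_tsub_left hm.le _

lemma volume_Ioo0_inter_Ioi (m : ℝ≥0∞) (c : ℝ) :
    volume (Ioo0 m ∩ Ioi c) = m - ENNReal.ofReal c := by
  rcases le_or_gt m (ENNReal.ofReal c) with hmc | hcm
  · rw [tsub_eq_zero_of_le hmc]
    exact measure_mono_null (fun s hs =>
      (hs.1.2.trans_le (hmc.trans (ENNReal.ofReal_le_ofReal hs.2.le))).false) measure_empty
  have hsub : Ioc 0 c ⊆ Ioo0 m := fun s hs =>
    ⟨hs.1, (ENNReal.ofReal_le_ofReal hs.2).trans_lt hcm⟩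
  have hdiff : Ioo0 m ∩ Ioi c = Ioo0 m \ Ioc 0 c := by
    ext s
    simp only [Ioo0, mem_inter_iff, mem_sdiff, mem_ofPred_eq, mem_Ioi, mem_Ioc, not_and, not_le]
    exact ⟨fun h => ⟨h.1, fun _ => h.2⟩, fun h => ⟨h.1, h.2 h.1.1⟩⟩
  rw [hdiff, measure_sdiff hsub measurableSet_Ioc.nullMeasurableSet measure_Ioc_lt_top.ne,
    volume_Ioo0, Real.volume_Ioc, sub_zero]

lemma lintegral_measure_Iio_rpow_le (ρ : Measure ℝ) [IsFiniteMeasure ρ] {e : ℝ} (he : 0 ≤ e) :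
    ENNReal.ofReal (e + 1) * ∫⁻ l, ρ (Iio l) ^ e ∂ρ ≤ ρ univ ^ (e + 1) := by
  rcases he.eq_or_lt with rfl | he
  · simp
  have hId : ∫⁻ s in Ioo0 (ρ univ), ENNReal.ofReal s ^ e =
      ∫⁻ c in Ioi 0, rpowDensity e c * (ρ univ - ENNReal.ofReal c) := by
    rw [lintegral_rpow_eq_lintegral_rpowDensity_mul he ENNReal.measurable_ofReal]
    refine setLIntegral_congr_fun measurableSet_Ioi fun c _ => ?_
    rw [Measure.restrict_apply (measurableSet_lt measurable_const ENNReal.measurable_ofReal),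
      ← volume_Ioo0_inter_Ioi, inter_comm]
    congr 2
    ext s
    exact and_congr_right fun hs => ENNReal.ofReal_lt_ofReal_iff hs.1
  calc ENNReal.ofReal (e + 1) * ∫⁻ l, ρ (Iio l) ^ e ∂ρ
      = ENNReal.ofReal (e + 1) *
          ∫⁻ c in Ioi 0, rpowDensity e c * ρ {l | ENNReal.ofReal c < ρ (Iio l)} := by
        rw [lintegral_rpow_eq_lintegral_rpowDensity_mul he (monotone_measure_Iio ρ).measurable]
    _ ≤ ENNReal.ofReal (e + 1) *
          ∫⁻ c in Ioi 0, rpowDensity e c * (ρ univ - ENNReal.ofReal c) := by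
        gcongr with c
        exact measure_setOf_lt_measure_Iio_le ρ _
    _ = ∫⁻ s in Ioo0 (ρ univ), rpowDensity (e + 1) s := by
        rw [← hId, ← lintegral_const_mul' _ _ ENNReal.ofReal_ne_top]
        refine setLIntegral_congr_fun (measurableSet_Ioo0 _) fun s (hs : s ∈ Ioo0 _) => ?_
        rw [rpowDensity, add_sub_cancel_right, ENNReal.ofReal_rpow_of_nonneg hs.1.le he.le,
          ← ENNReal.ofReal_mul (by positivity)]
    _ = ρ univ ^ (e + 1) := setLIntegral_rpowDensity_Ioo0 (by positivity) _

lemma lintegral_rpowDensity_mul_rpow_le {p q : ℝ} (hp : 0 < p) (hpq : p ≤ q) {W : ℝ → ℝ≥0∞}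
    (hW : Antitone W) :
    ∫⁻ l in Ioi 0, rpowDensity q l * W l ^ (q / p) ≤
      (∫⁻ l in Ioi 0, rpowDensity p l * W l) ^ (q / p) := by
  set r := q / p
  have hr : 1 ≤ r := (one_le_div hp).2 hpq
  set G : ℝ → ℝ≥0∞ := fun l => rpowDensity p l * W l
  have hG : Measurable G := (measurable_rpowDensity p).mul hW.measurable
  rcases eq_or_ne (∫⁻ l in Ioi 0, G l) ∞ with hI | hI
  · simp only [G] at hI
    rw [hI, ENNReal.top_rpow_of_pos (by positivity)]
    exact le_top
  set ρ := (volume.restrict (Ioi (0 : ℝ))).withDensity G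
  have : IsFiniteMeasure ρ := isFiniteMeasure_withDensity hI
  have hρ : ρ univ = ∫⁻ l in Ioi 0, G l := by
    rw [withDensity_apply _ MeasurableSet.univ, Measure.restrict_univ]
  -- with `ρ = G dl`, antitonicity of `W` turns the integrand into `r ρ(Iio l) ^ (r - 1) dρ`
  have hlow : ∀ l, 0 < l → ENNReal.ofReal (l ^ p) * W l ≤ ρ (Iio l) := by
    intro l hl
    calc ENNReal.ofReal (l ^ p) * W l = (∫⁻ s in Ioo 0 l, rpowDensity p s) * W l := by
          rw [setLIntegral_rpowDensity_Ioo hp hl.le]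
      _ = ∫⁻ s in Ioo 0 l, rpowDensity p s * W l :=
          (lintegral_mul_const _ (measurable_rpowDensity p)).symm
      _ ≤ ∫⁻ s in Ioo 0 l, G s :=
          setLIntegral_mono' measurableSet_Ioo fun s hs => mul_le_mul_right (hW hs.2.le) _
      _ = ρ (Iio l) := by
          rw [withDensity_apply _ measurableSet_Iio, Measure.restrict_restrict measurableSet_Iio,
            Iio_inter_Ioi]
  have hpt : ∀ l ∈ Ioi (0 : ℝ),
      rpowDensity q l * W l ^ r ≤ ENNReal.ofReal r * (ρ (Iio l) ^ (r - 1) * G l) := by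
    intro l (hl : 0 < l)
    have hdens : rpowDensity q l =
        ENNReal.ofReal r * ENNReal.ofReal (l ^ p) ^ (r - 1) * rpowDensity p l := by
      have hq : q = p * r := by simp only [r]; field_simp
      rw [ENNReal.ofReal_rpow_of_nonneg (by positivity) (by linarith), rpowDensity, rpowDensity,
        ← ENNReal.ofReal_mul (by positivity), ← ENNReal.ofReal_mul (by positivity),
        ← Real.rpow_mul hl.le]
      congr 1
      rw [show q - 1 = p * (r - 1) + (p - 1) by rw [hq]; ring, Real.rpow_add hl, hq]
      ring
    calc rpowDensity q l * W l ^ r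
        = ENNReal.ofReal r * ((ENNReal.ofReal (l ^ p) * W l) ^ (r - 1) * G l) := by
          rw [hdens, ENNReal.mul_rpow_of_nonneg _ _ (by linarith),
            show W l ^ r = W l ^ (r - 1) * W l by
              conv_lhs => rw [← sub_add_cancel r 1,
                ENNReal.rpow_add_of_nonneg _ _ (by linarith) zero_le_one, ENNReal.rpow_one]]
          ring
      _ ≤ ENNReal.ofReal r * (ρ (Iio l) ^ (r - 1) * G l) := by
          gcongr
          exact hlow l hl
  calc ∫⁻ l in Ioi 0, rpowDensity q l * W l ^ r
      ≤ ∫⁻ l in Ioi 0, ENNReal.ofReal r * (ρ (Iio l) ^ (r - 1) * G l) :=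
        setLIntegral_mono' measurableSet_Ioi hpt
    _ = ENNReal.ofReal (r - 1 + 1) * ∫⁻ l, ρ (Iio l) ^ (r - 1) ∂ρ := by
        rw [sub_add_cancel, lintegral_const_mul' _ _ ENNReal.ofReal_ne_top,
          lintegral_withDensity_eq_lintegral_mul₀ hG.aemeasurable
            ((monotone_measure_Iio ρ).measurable.pow_const _).aemeasurable]
        simp only [Pi.mul_apply, mul_comm]
    _ ≤ ρ univ ^ (r - 1 + 1) := lintegral_measure_Iio_rpow_le ρ (by linarith)
    _ = (∫⁻ l in Ioi 0, rpowDensity p l * W l) ^ r := by rw [sub_add_cancel, hρ]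

end Hardy

section Sections

variable {α β : Type*} [MeasurableSpace α] [MeasurableSpace β] {μ : Measure α} {ν : Measure β}
  {S T : Set (α × β)}

lemma measure_prod_eq_of_forall_fst [SFinite ν] (hS : MeasurableSet S) (hT : MeasurableSet T)
    (h : ∀ x, ν (Prod.mk x ⁻¹' S) = ν (Prod.mk x ⁻¹' T)) : μ.prod ν S = μ.prod ν T := by
  rw [Measure.prod_apply hS, Measure.prod_apply hT]
  exact lintegral_congr h

lemma measure_prod_eq_of_forall_snd [SFinite μ] [SFinite ν] (hS : MeasurableSet S)
    (hT : MeasurableSet T) (h : ∀ y, μ ((·, y) ⁻¹' S) = μ ((·, y) ⁻¹' T)) :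
    μ.prod ν S = μ.prod ν T := by
  rw [Measure.prod_apply_symm hS, Measure.prod_apply_symm hT]
  exact lintegral_congr h

lemma ae_eq_prod_of_forall_fst [SFinite ν] (hS : MeasurableSet S) (hT : MeasurableSet T)
    (h : ∀ x, Prod.mk x ⁻¹' S =ᵐ[ν] Prod.mk x ⁻¹' T) : S =ᵐ[μ.prod ν] T := by
  rw [← measure_symmDiff_eq_zero_iff, measure_prod_eq_of_forall_fst (hS.symmDiff hT)
    MeasurableSet.empty fun x => ?_, measure_empty]
  simpa [preimage_symmDiff, measure_symmDiff_eq_zero_iff] using h x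

lemma ae_eq_prod_of_forall_snd [SFinite μ] [SFinite ν] (hS : MeasurableSet S)
    (hT : MeasurableSet T) (h : ∀ y, (·, y) ⁻¹' S =ᵐ[μ] (·, y) ⁻¹' T) : S =ᵐ[μ.prod ν] T := by
  rw [← measure_symmDiff_eq_zero_iff, measure_prod_eq_of_forall_snd (hS.symmDiff hT)
    MeasurableSet.empty fun y => ?_, measure_empty]
  simpa [preimage_symmDiff, measure_symmDiff_eq_zero_iff] using h y

end Sections

lemma measurable_decRearr_section {γ α : Type*} [MeasurableSpace γ] [MeasurableSpace α]
    {ν : Measure α} [SFinite ν] {g : γ × α → ℝ≥0∞} (hg : Measurable g) :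
    Measurable fun z : γ × ℝ => decRearr ν (fun y => g (z.1, y)) z.2 := by
  refine measurable_of_Ioi fun l => ?_
  have hpre : (fun z : γ × ℝ => decRearr ν (fun y => g (z.1, y)) z.2) ⁻¹' Ioi l =
      {z | ENNReal.ofReal z.2 < ν (Prod.mk z.1 ⁻¹' {p | l < g p})} := by
    ext z
    exact lt_decRearr_iff ν _ z.2 l
  rw [hpre]
  exact measurableSet_lt (ENNReal.measurable_ofReal.comp measurable_snd)
    ((measurable_measure_prodMk_left (measurableSet_lt measurable_const hg)).comp measurable_fst)

lemma measurable_rearrY {f : ℝ × ℝ → ℝ} (hf : Measurable f) :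
    Measurable fun z : ℝ × ℝ => rearrY f z.1 z.2 :=
  measurable_decRearr_section hf.abs.ennreal_ofReal

lemma measurable_rearrYX {f : ℝ × ℝ → ℝ} (hf : Measurable f) :
    Measurable fun z : ℝ × ℝ => rearrYX f z.1 z.2 :=
  ((measurable_decRearr_section (ν := volume)
    ((measurable_rearrY hf).comp (f := Prod.swap) measurable_swap)).comp measurable_swap :)

lemma rearrYX_anti (f : ℝ × ℝ → ℝ) {s s' t t' : ℝ} (hs : s' ≤ s) (ht : t' ≤ t) :
    rearrYX f s t ≤ rearrYX f s' t' :=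
  (decRearr_antitone _ _ hs).trans (decRearr_mono _ (fun _ => decRearr_antitone _ _ ht) s')

lemma volume_setOf_pos_lt_decRearr {α : Type*} [MeasurableSpace α] (μ : Measure α)
    (h : α → ℝ≥0∞) (l : ℝ≥0∞) : volume {t | 0 < t ∧ l < decRearr μ h t} = μ {x | l < h x} := by
  rw [setOf_pos_lt_decRearr, volume_Ioo0]

def levelSetYX (f : ℝ × ℝ → ℝ) (l : ℝ≥0∞) : Set (ℝ × ℝ) :=
  {z | l < rearrYX f z.1 z.2} ∩ Ioi 0 ×ˢ Ioi 0

lemma measurableSet_levelSetYX {f : ℝ × ℝ → ℝ} (hf : Measurable f) (l : ℝ≥0∞) :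
    MeasurableSet (levelSetYX f l) :=
  (measurableSet_lt measurable_const (measurable_rearrYX hf)).inter
    (measurableSet_Ioi.prod measurableSet_Ioi)

lemma levelSetYX_antitone (f : ℝ × ℝ → ℝ) : Antitone (levelSetYX f) :=
  fun _ _ hll' _ hz => ⟨lt_of_le_of_lt hll' hz.1, hz.2⟩

lemma decreasingSet_levelSetYX {f : ℝ × ℝ → ℝ} (hf : Measurable f) (l : ℝ≥0∞) :
    DecreasingSet (levelSetYX f l) :=
  ⟨measurableSet_levelSetYX hf l, inter_subset_right,
    fun _ _ _ _ hz hs' hss' ht' htt' => ⟨hz.1.trans_le (rearrYX_anti f hss' htt'), hs', ht'⟩⟩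

lemma volume_levelSetYX {f : ℝ × ℝ → ℝ} (hf : Measurable f) (l : ℝ≥0∞) :
    volume (levelSetYX f l) = volume {z | l < ENNReal.ofReal |f z|} := by
  set P : Set (ℝ × ℝ) := {z | 0 < z.2 ∧ l < rearrY f z.1 z.2}
  have hP : MeasurableSet P :=
    (measurable_snd measurableSet_Ioi).inter
      (measurableSet_lt measurable_const (measurable_rearrY hf))
  rw [Measure.volume_eq_prod]
  calc volume.prod volume (levelSetYX f l) = volume.prod volume P := by
        refine measure_prod_eq_of_forall_snd (measurableSet_levelSetYX hf l) hP fun t => ?_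
        by_cases ht : 0 < t
        · have hsec : (·, t) ⁻¹' levelSetYX f l =
              {s | 0 < s ∧ l < decRearr volume (fun x => rearrY f x t) s} := by
            ext s; simp [levelSetYX, rearrYX, rearrE_eq_decRearr, ht, and_comm]
          rw [hsec, volume_setOf_pos_lt_decRearr]
          congr 1
          ext x; simp [P, ht]
        · have h1 : (·, t) ⁻¹' levelSetYX f l = ∅ := by
            ext s; simp [levelSetYX, ht]
          have h2 : (·, t) ⁻¹' P = ∅ := by
            ext s; simp [P, ht]
          rw [h1, h2]
    _ = volume.prod volume {z | l < ENNReal.ofReal |f z|} := by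
        refine measure_prod_eq_of_forall_fst hP
          (measurableSet_lt measurable_const hf.abs.ennreal_ofReal) fun x => ?_
        exact volume_setOf_pos_lt_decRearr volume (fun y => ENNReal.ofReal |f (x, y)|) l

lemma Uof_eq_setLIntegral_Ioo0 (u : ℝ → ℝ) (m : ℝ≥0∞) :
    Uof u m = ∫⁻ θ in Ioo0 m, ENNReal.ofReal (u θ) := rfl

lemma lamR2Norm_rpow_eq {q : ℝ} (hq : 0 < q) {u : ℝ → ℝ}
    (hu : AEMeasurable (fun θ => ENNReal.ofReal (u θ)) (volume.restrict (Ioi 0)))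
    {f : ℝ × ℝ → ℝ} (hf : Measurable f) :
    lamR2Norm q u f ^ q =
      ∫⁻ l in Ioi 0, rpowDensity q l * Uof u (volume (levelSetYX f (ENNReal.ofReal l))) := by
  rw [lamR2Norm, ← ENNReal.rpow_mul, one_div_mul_cancel hq.ne', ENNReal.rpow_one,
    rearr2_eq_decRearr, setLIntegral_rpow_mul_eq hq (decRearr_antitone _ _).measurable hu]
  refine lintegral_congr fun l => ?_
  rw [volume_levelSetYX hf, Uof_eq_setLIntegral_Ioo0, ← setOf_pos_lt_decRearr, inter_comm]
  rfl

lemma lam2Norm_rpow_eq {p : ℝ} (hp : 0 < p) {w : ℝ × ℝ → ℝ}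
    (hw : AEMeasurable (fun z => ENNReal.ofReal (w z)) (volume.restrict (Ioi 0 ×ˢ Ioi 0)))
    {f : ℝ × ℝ → ℝ} (hf : Measurable f) :
    lam2Norm p w f ^ p =
      ∫⁻ l in Ioi 0, rpowDensity p l * wMeas w (levelSetYX f (ENNReal.ofReal l)) := by
  rw [lam2Norm, ← ENNReal.rpow_mul, one_div_mul_cancel hp.ne', ENNReal.rpow_one]
  rw [← setLIntegral_prod (μ := volume) (ν := volume)
    (fun z => rearrYX f z.1 z.2 ^ p * ENNReal.ofReal (w z))
    (by rw [← Measure.volume_eq_prod]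
        exact ((measurable_rearrYX hf).pow_const p).aemeasurable.mul hw),
    ← Measure.volume_eq_prod, setLIntegral_rpow_mul_eq hp (measurable_rearrYX hf) hw]
  rfl

theorem lamR2Norm_le_of_forall_decreasingSet {p q : ℝ} (hp : 0 < p) (hpq : p ≤ q)
    {u : ℝ → ℝ} (hu : AEMeasurable (fun θ => ENNReal.ofReal (u θ)) (volume.restrict (Ioi 0)))
    {w : ℝ × ℝ → ℝ}
    (hw : AEMeasurable (fun z => ENNReal.ofReal (w z)) (volume.restrict (Ioi 0 ×ˢ Ioi 0)))
    {C : ℝ} (hD : ∀ D, DecreasingSet D →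
      Uof u (volume D) ^ (1 / q) ≤ ENNReal.ofReal C * wMeas w D ^ (1 / p))
    {f : ℝ × ℝ → ℝ} (hf : Measurable f) :
    lamR2Norm q u f ≤ ENNReal.ofReal C * lam2Norm p w f := by
  have hq : 0 < q := hp.trans_le hpq
  set W : ℝ → ℝ≥0∞ := fun l => wMeas w (levelSetYX f (ENNReal.ofReal l))
  have hW : Antitone W := fun _ _ hll' =>
    lintegral_mono_set (levelSetYX_antitone f (ENNReal.ofReal_le_ofReal hll'))
  have hUW : ∀ l, Uof u (volume (levelSetYX f (ENNReal.ofReal l))) ≤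
      ENNReal.ofReal C ^ q * W l ^ (q / p) := by
    intro l
    have h := ENNReal.rpow_le_rpow (hD _ (decreasingSet_levelSetYX hf (ENNReal.ofReal l))) hq.le
    rwa [← ENNReal.rpow_mul, one_div_mul_cancel hq.ne', ENNReal.rpow_one,
      ENNReal.mul_rpow_of_nonneg _ _ hq.le, ← ENNReal.rpow_mul, one_div_mul_eq_div] at h
  refine (ENNReal.rpow_le_rpow_iff hq).1 ?_
  calc lamR2Norm q u f ^ q
      = ∫⁻ l in Ioi 0, rpowDensity q l * Uof u (volume (levelSetYX f (ENNReal.ofReal l))) :=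
        lamR2Norm_rpow_eq hq hu hf
    _ ≤ ∫⁻ l in Ioi 0, ENNReal.ofReal C ^ q * (rpowDensity q l * W l ^ (q / p)) :=
        lintegral_mono fun l => by rw [mul_left_comm]; gcongr; exact hUW l
    _ = ENNReal.ofReal C ^ q * ∫⁻ l in Ioi 0, rpowDensity q l * W l ^ (q / p) :=
        lintegral_const_mul' _ _ (ENNReal.rpow_ne_top_of_nonneg hq.le ENNReal.ofReal_ne_top)
    _ ≤ ENNReal.ofReal C ^ q * (∫⁻ l in Ioi 0, rpowDensity p l * W l) ^ (q / p) := by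
        gcongr
        exact lintegral_rpowDensity_mul_rpow_le hp hpq hW
    _ = (ENNReal.ofReal C * lam2Norm p w f) ^ q := by
        rw [← lam2Norm_rpow_eq hp hw hf, ← ENNReal.rpow_mul, mul_div_cancel₀ _ hp.ne',
          ENNReal.mul_rpow_of_nonneg _ _ hq.le]

section Indicator

lemma ofReal_abs_indicator_one {α : Type*} (S : Set α) :
    (fun z => ENNReal.ofReal |S.indicator (1 : α → ℝ) z|) = S.indicator 1 := by
  ext z
  by_cases hz : z ∈ S <;> simp [hz]

lemma indicator_one_rpow_mul {α : Type*} (S : Set α) {p : ℝ} (hp : 0 < p) (g : α → ℝ≥0∞)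
    (a : α) : S.indicator 1 a ^ p * g a = S.indicator g a := by
  by_cases ha : a ∈ S <;> simp [ha, hp]

/-- Every vertical section of `S` replaced by an initial interval of the same length: the
indicator of `rearrSetY S` is the rearrangement in `y` of `1_S`. -/
def rearrSetY (S : Set (ℝ × ℝ)) : Set (ℝ × ℝ) :=
  {z | z.2 ∈ Ioo0 (volume (Prod.mk z.1 ⁻¹' S))}

def rearrSetX (S : Set (ℝ × ℝ)) : Set (ℝ × ℝ) :=
  {z | z.1 ∈ Ioo0 (volume ((·, z.2) ⁻¹' S))}

lemma measurableSet_rearrSetY {S : Set (ℝ × ℝ)} (hS : MeasurableSet S) :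
    MeasurableSet (rearrSetY S) :=
  (measurable_snd measurableSet_Ioi).inter <|
    measurableSet_lt (ENNReal.measurable_ofReal.comp measurable_snd)
      ((measurable_measure_prodMk_left (ν := volume) hS).comp measurable_fst)

lemma measurableSet_rearrSetX {S : Set (ℝ × ℝ)} (hS : MeasurableSet S) :
    MeasurableSet (rearrSetX S) :=
  (measurable_fst measurableSet_Ioi).inter <|
    measurableSet_lt (ENNReal.measurable_ofReal.comp measurable_fst)
      ((measurable_measure_prodMk_right (μ := volume) hS).comp measurable_snd)

lemma rearr2_indicator_one (S : Set (ℝ × ℝ)) {θ : ℝ} (hθ : 0 < θ) :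
    rearr2 (S.indicator 1) θ = (Ioo0 (volume S)).indicator 1 θ := by
  rw [rearr2_eq_decRearr, ofReal_abs_indicator_one, decRearr_indicator_one _ _ hθ]

lemma rearrY_indicator_one (S : Set (ℝ × ℝ)) (x : ℝ) {t : ℝ} (ht : 0 < t) :
    rearrY (S.indicator 1) x t = (rearrSetY S).indicator 1 (x, t) := by
  have h : (fun y => ENNReal.ofReal |S.indicator (1 : ℝ × ℝ → ℝ) (x, y)|) =
      (Prod.mk x ⁻¹' S).indicator 1 := by
    ext y
    exact congrFun (ofReal_abs_indicator_one S) (x, y)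
  exact (congrArg (decRearr volume · t) h).trans (decRearr_indicator_one _ _ ht)

lemma rearrYX_indicator_one (S : Set (ℝ × ℝ)) {s t : ℝ} (hs : 0 < s) (ht : 0 < t) :
    rearrYX (S.indicator 1) s t = (rearrSetX (rearrSetY S)).indicator 1 (s, t) := by
  have h : (fun x => rearrY (S.indicator 1) x t) = ((·, t) ⁻¹' rearrSetY S).indicator 1 := by
    ext x
    exact rearrY_indicator_one S x ht
  exact (congrArg (decRearr volume · s) h).trans (decRearr_indicator_one _ _ hs)

end Indicator

section Decreasing

lemma ae_eq_Ioo0_volume {S : Set ℝ} (hS : S ⊆ Ioi 0) (hdc : ∀ t ∈ S, Ioc 0 t ⊆ S) :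
    S =ᵐ[volume] Ioo0 (volume S) := by
  have hsub : Ioo0 (volume S) ⊆ S := by
    intro t ht
    by_contra htS
    have hle : volume S ≤ ENNReal.ofReal t := by
      have hSt : S ⊆ Ioo 0 t := fun s hs =>
        ⟨hS hs, not_le.1 fun hts => htS (hdc s hs ⟨ht.1, hts⟩)⟩
      simpa using measure_mono (μ := volume) hSt
    exact (ht.2.trans_le hle).false
  have hdiff : S \ Ioo0 (volume S) ⊆ {(volume S).toReal} := by
    rintro t ⟨htS, ht⟩
    have hle : ENNReal.ofReal t ≤ volume S := by
      simpa using measure_mono (μ := volume) (hdc t htS)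
    have heq : ENNReal.ofReal t = volume S := hle.antisymm (not_lt.1 fun h => ht ⟨hS htS, h⟩)
    rw [mem_singleton_iff, ← heq, ENNReal.toReal_ofReal (le_of_lt (hS htS))]
  refine ae_eq_set.2 ⟨measure_mono_null hdiff (Real.volume_singleton), ?_⟩
  rw [sdiff_eq_empty.2 hsub, measure_empty]

variable {D : Set (ℝ × ℝ)}

lemma DecreasingSet.prodMk_preimage_subset (hD : DecreasingSet D) (x : ℝ) :
    Prod.mk x ⁻¹' D ⊆ Ioi 0 := fun _ hy => (hD.2.1 hy).2

lemma DecreasingSet.Ioc_subset_prodMk_preimage (hD : DecreasingSet D) {x t : ℝ}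
    (ht : t ∈ Prod.mk x ⁻¹' D) : Ioc 0 t ⊆ Prod.mk x ⁻¹' D :=
  fun _ ht' => hD.2.2 _ _ _ _ ht (hD.2.1 ht).1 le_rfl ht'.1 ht'.2

lemma DecreasingSet.preimage_subset (hD : DecreasingSet D) (t : ℝ) :
    (·, t) ⁻¹' D ⊆ Ioi 0 := fun _ hx => (hD.2.1 hx).1

lemma DecreasingSet.Ioc_subset_preimage (hD : DecreasingSet D) {s t : ℝ}
    (hs : s ∈ (·, t) ⁻¹' D) : Ioc 0 s ⊆ (·, t) ⁻¹' D :=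
  fun _ hs' => hD.2.2 _ _ _ _ hs hs'.1 hs'.2 (hD.2.1 hs).2 le_rfl

lemma DecreasingSet.rearrSetY_ae_eq (hD : DecreasingSet D) : rearrSetY D =ᵐ[volume] D := by
  rw [Measure.volume_eq_prod]
  exact ae_eq_prod_of_forall_fst (measurableSet_rearrSetY hD.1) hD.1 fun x =>
    (ae_eq_Ioo0_volume (hD.prodMk_preimage_subset x)
      fun _ => hD.Ioc_subset_prodMk_preimage).symm

lemma DecreasingSet.rearrSetX_ae_eq (hD : DecreasingSet D) : rearrSetX D =ᵐ[volume] D := by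
  rw [Measure.volume_eq_prod]
  exact ae_eq_prod_of_forall_snd (measurableSet_rearrSetX hD.1) hD.1 fun t =>
    (ae_eq_Ioo0_volume (hD.preimage_subset t) fun _ => hD.Ioc_subset_preimage).symm

lemma DecreasingSet.rearrSetY (hD : DecreasingSet D) : DecreasingSet (rearrSetY D) := by
  refine ⟨measurableSet_rearrSetY hD.1, fun z hz => ⟨?_, hz.1⟩, ?_⟩
  · by_contra hz1
    have hempty : Prod.mk z.1 ⁻¹' D = ∅ :=
      eq_empty_of_forall_notMem fun y hy => hz1 (hD.2.1 hy).1
    have h2 : ENNReal.ofReal z.2 < volume (Prod.mk z.1 ⁻¹' D) := hz.2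
    simp [hempty] at h2
  · intro s t s' t' hst hs' hss' ht' htt'
    have hsec : Prod.mk s ⁻¹' D ⊆ Prod.mk s' ⁻¹' D :=
      fun y hy => hD.2.2 _ _ _ _ hy hs' hss' (hD.2.1 hy).2 le_rfl
    exact ⟨ht', (ENNReal.ofReal_le_ofReal htt').trans_lt (hst.2.trans_le (measure_mono hsec))⟩

end Decreasing

lemma lamR2Norm_indicator_one {q : ℝ} (hq : 0 < q) (u : ℝ → ℝ) (S : Set (ℝ × ℝ)) :
    lamR2Norm q u (S.indicator 1) = Uof u (volume S) ^ (1 / q) := by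
  rw [lamR2Norm, Uof_eq_setLIntegral_Ioo0,
    setLIntegral_congr_fun measurableSet_Ioi fun θ (hθ : 0 < θ) => by
      rw [rearr2_indicator_one S hθ, indicator_one_rpow_mul _ hq fun θ => ENNReal.ofReal (u θ)],
    setLIntegral_indicator (measurableSet_Ioo0 _), inter_eq_left.2 (Ioo0_subset_Ioi _)]

lemma lam2Norm_indicator_one {p : ℝ} (hp : 0 < p) {w : ℝ × ℝ → ℝ}
    (hw : AEMeasurable (fun z => ENNReal.ofReal (w z)) (volume.restrict (Ioi 0 ×ˢ Ioi 0)))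
    {D : Set (ℝ × ℝ)} (hD : DecreasingSet D) :
    lam2Norm p w (D.indicator 1) = wMeas w D ^ (1 / p) := by
  set E := rearrSetX (rearrSetY D)
  have hE : (E ∩ Ioi 0 ×ˢ Ioi 0 : Set (ℝ × ℝ)) =ᵐ[volume] D := by
    have h := (hD.rearrSetY.rearrSetX_ae_eq.trans hD.rearrSetY_ae_eq).inter
      (ae_eq_refl (Ioi (0 : ℝ) ×ˢ Ioi 0))
    rwa [inter_eq_left.2 hD.2.1] at h
  have hf : Measurable fun z : ℝ × ℝ => rearrYX (D.indicator 1) z.1 z.2 :=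
    measurable_rearrYX (measurable_one.indicator hD.1)
  rw [lam2Norm, wMeas, ← setLIntegral_prod (μ := volume) (ν := volume)
      (fun z => rearrYX (D.indicator 1) z.1 z.2 ^ p * ENNReal.ofReal (w z))
      (by rw [← Measure.volume_eq_prod]; exact (hf.pow_const p).aemeasurable.mul hw),
    ← Measure.volume_eq_prod,
    setLIntegral_congr_fun (measurableSet_Ioi.prod measurableSet_Ioi) fun z hz => by
      rw [rearrYX_indicator_one D hz.1 hz.2,
        indicator_one_rpow_mul _ hp fun z => ENNReal.ofReal (w z)],
    setLIntegral_indicator (measurableSet_rearrSetX (measurableSet_rearrSetY hD.1)),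
    setLIntegral_congr hE]

theorem embedding_lam2_lamR2_iff_general (p q : ℝ) (hp : 0 < p) (hpq : p ≤ q)
    (u : ℝ → ℝ) (hu : IsWeight u) (w : ℝ × ℝ → ℝ) (hw : IsWeight2 w)
    (C : ℝ) :
    (∀ f : ℝ × ℝ → ℝ, Measurable f →
        lamR2Norm q u f ≤ ENNReal.ofReal C * lam2Norm p w f) ↔
      ∀ D : Set (ℝ × ℝ), DecreasingSet D →
        (Uof u (volume D)) ^ (1 / q) ≤ ENNReal.ofReal C * (wMeas w D) ^ (1 / p) := by
  have hu' := hu.2.aestronglyMeasurable.aemeasurable.ennreal_ofReal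
  have hw' := hw.2.aestronglyMeasurable.aemeasurable.ennreal_ofReal
  refine ⟨fun hemb D hD => ?_,
    fun hD f hf => lamR2Norm_le_of_forall_decreasingSet hp hpq hu' hw' hD hf⟩
  simpa only [lamR2Norm_indicator_one (hp.trans_le hpq), lam2Norm_indicator_one hp hw' hD] using
    hemb (D.indicator 1) (measurable_one.indicator hD.1)

/-- for `0 < p ≤ q < ∞`, `‖f‖_{Λ^q(ℝ²,u)} ≤ C ‖f‖_{Λ₂^p(w)}` holds for all
measurable `f` iff `(∫_0^{|D|} u)^{1/q} ≤ C (∫_D w)^{1/p}` for all decreasing sets `D`. -/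
theorem embedding_lam2_lamR2_iff (p q : ℝ) (hp : 0 < p) (hpq : p ≤ q)
    (u : ℝ → ℝ) (hu : IsWeight u) (w : ℝ × ℝ → ℝ) (hw : IsWeight2 w)
    (C : ℝ) (hC : 0 < C) :
    (∀ f : ℝ × ℝ → ℝ, Measurable f →
        lamR2Norm q u f ≤ ENNReal.ofReal C * lam2Norm p w f) ↔
      ∀ D : Set (ℝ × ℝ), DecreasingSet D →
        (Uof u (volume D)) ^ (1 / q) ≤ ENNReal.ofReal C * (wMeas w D) ^ (1 / p) :=
  embedding_lam2_lamR2_iff_general p q hp hpq u hu w hw C
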